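/- Let p, q be coprime positive integers with q even, and b an integer. If q/2 and b have different parity (i.e., q/2 + b is odd), then the generalized quadratic Gauss sum G(p,b,q) = ∑_{r=0}^{q-1} e^{2πi(p r² + b r)/q} equals 0. -/

import Mathlib

open Complex

noncomputable def G (p : ℕ) (b : ℤ) (q : ℕ) : ℂ :=
  ∑ r ∈ Finset.range q,
    Complex.exp (2 * Real.pi * Complex.I * ((p * r ^ 2 + b * r : ℂ) / q))

/-! Write `q = 2m`. Shifting `r` by half a period changes the exponent `(p r² + b r) / q` by
`p r + (p m + b) / 2`, and `p m + b` is odd since `p` is odd; so the second half of the sum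
cancels the first. -/

theorem Finset.sum_range_two_mul_eq_zero {M : Type*} [AddCommGroup M] {f : ℕ → M} {m : ℕ}
    (h : ∀ r < m, f (m + r) = -f r) : ∑ r ∈ Finset.range (2 * m), f r = 0 := by
  rw [two_mul, Finset.sum_range_add,
    Finset.sum_congr rfl fun r hr => h r (Finset.mem_range.mp hr), Finset.sum_neg_distrib,
    add_neg_cancel]

theorem Complex.exp_quadratic_add_half_period {p m : ℕ} {b : ℤ} (hm : m ≠ 0)
    (hodd : Odd (p * m + b)) (r : ℕ) :
    exp (2 * Real.pi * I * ((p * ((m + r : ℕ) : ℂ) ^ 2 + b * (m + r : ℕ)) / (2 * m : ℕ))) =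
      -exp (2 * Real.pi * I * ((p * (r : ℂ) ^ 2 + b * r) / (2 * m : ℕ))) := by
  obtain ⟨c, hc⟩ := hodd
  have hc' : (p * m + b : ℂ) = 2 * c + 1 := by exact_mod_cast hc
  have hmC : (m : ℂ) ≠ 0 := Nat.cast_ne_zero.mpr hm
  rw [← exp_antiperiodic.int_odd_mul_antiperiodic (p * r + c)]
  congr 1
  push_cast
  field_simp
  linear_combination (m : ℂ) * hc'

theorem gauss_sum_even_diff_parity_eq_zero_general (p q : ℕ) (b : ℤ)
    (hcop : Nat.Coprime p q) (heven : Even q) (hpar : Odd ((q / 2 : ℤ) + b)) :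
    G p b q = 0 := by
  obtain ⟨m, rfl⟩ := heven.two_dvd
  have hp_odd : Odd p := (Nat.Coprime.coprime_mul_right_right hcop).odd_of_right
  have hpm_odd : Odd (p * m + b : ℤ) := by
    push_cast at hpar
    rw [Int.mul_ediv_cancel_left _ two_ne_zero] at hpar
    have hp_odd' : Odd (p : ℤ) := by exact_mod_cast hp_odd
    simp only [Int.odd_add, Int.odd_mul] at hpar ⊢
    tauto
  exact Finset.sum_range_two_mul_eq_zero fun r hr =>
    exp_quadratic_add_half_period (Nat.ne_zero_of_lt hr) hpm_odd r

/-- If `p, q` are coprime positive integers, `q` is even, and `q/2` and `b` have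
different parity, then the generalized quadratic Gauss sum `G(p,b,q)` vanishes. -/
theorem gauss_sum_even_diff_parity_eq_zero (p q : ℕ) (b : ℤ) (hp : 0 < p) (hq : 0 < q)
    (hcop : Nat.Coprime p q) (heven : Even q) (hpar : Odd ((q / 2 : ℤ) + b)) :
    G p b q = 0 :=
  gauss_sum_even_diff_parity_eq_zero_general p q b hcop heven hpar
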